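/- arXiv:2512.22902 — 6 statements merged into one kernel-verified Lean document; each statement's English description precedes it below -/
import Mathlib

section
/- Let n be a nonzero integer that is not a perfect square and let Q be an integral binary quadratic form of discriminant 4n. Then for every real T > 0 one has D_T^Q = F_T^Q; that is, the map sending a D(n)-pair {a,c} with a > c to the form [a, 2√(ac+n), c] is a bijection between the set of D(n)-pairs {a,c} with a,c ∈ {−T,…,T} and E_{ac} ∼ Q, and the set of integral binary quadratic forms [a,b,c] with |a| ≤ T, |c| ≤ T, a > c, b ≥ 0 and [a,b,c] ∼ Q. -/
/-!
A form `[a, b, c]` properly equivalent to `Q` has the discriminant `4n` of `Q`, so `b` is even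
and `(b/2)² = ac + n`; since `n` is not a square, `ac ≠ 0`. Hence every form counted by
`F_T^Q` is `E_{ac}` for a `D(n)`-pair `{a, c}` counted by `D_T^Q`, and `{a, c} ↦ E_{ac}`,
which keeps `a` and `c`, is injective.
-/

open Filter Real Asymptotics

/-- The substitution action of `SL₂(ℤ)` on integral binary quadratic forms, where a form
`a x² + b x y + c y²` is encoded as the triple `(a, b, c)`: for `g = (p q; r s)` the form
`g • Q` is `(x, y) ↦ Q (p x + q y, r x + s y)`. -/
def actForm (g : Matrix.SpecialLinearGroup (Fin 2) ℤ) (Q : ℤ × ℤ × ℤ) : ℤ × ℤ × ℤ :=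
  let p := (g : Matrix (Fin 2) (Fin 2) ℤ) 0 0
  let q := (g : Matrix (Fin 2) (Fin 2) ℤ) 0 1
  let r := (g : Matrix (Fin 2) (Fin 2) ℤ) 1 0
  let s := (g : Matrix (Fin 2) (Fin 2) ℤ) 1 1
  (Q.1 * p ^ 2 + Q.2.1 * p * r + Q.2.2 * r ^ 2,
   2 * Q.1 * p * q + Q.2.1 * (p * s + q * r) + 2 * Q.2.2 * r * s,
   Q.1 * q ^ 2 + Q.2.1 * q * s + Q.2.2 * s ^ 2)

/-- Proper (`SL₂(ℤ)`) equivalence of integral binary quadratic forms. -/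
def ProperEquiv (Q Q' : ℤ × ℤ × ℤ) : Prop := ∃ g, actForm g Q = Q'

/-- `DTQ n Q T` is the number of `D(n)`-pairs `{a, c}` (written with `a > c`) with
`a, c ∈ {-T, …, T}` whose associated form `E_{ac} = [a, 2√(ac+n), c]` is properly
equivalent to `Q`. -/
noncomputable def DTQ (n : ℤ) (Q : ℤ × ℤ × ℤ) (T : ℝ) : ℕ :=
  Set.ncard {ac : ℤ × ℤ | ac.2 < ac.1 ∧ ac.1 ≠ 0 ∧ ac.2 ≠ 0 ∧
    |(ac.1 : ℝ)| ≤ T ∧ |(ac.2 : ℝ)| ≤ T ∧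
    ∃ b : ℤ, 0 ≤ b ∧ b ^ 2 = ac.1 * ac.2 + n ∧ ProperEquiv (ac.1, 2 * b, ac.2) Q}

/-- `FTQ Q T` is the number of integral binary quadratic forms `[a, b, c]` with
`|a| ≤ T`, `|c| ≤ T`, `a > c`, `b ≥ 0` which are properly equivalent to `Q`. -/
noncomputable def FTQ (Q : ℤ × ℤ × ℤ) (T : ℝ) : ℕ :=
  Set.ncard {f : ℤ × ℤ × ℤ | |(f.1 : ℝ)| ≤ T ∧ |(f.2.2 : ℝ)| ≤ T ∧
    f.2.2 < f.1 ∧ 0 ≤ f.2.1 ∧ ProperEquiv f Q}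

/-- `ω(d)`: the number of `SL₂(ℤ)`-automorphs of a primitive definite form of
discriminant `d`. -/
def omegaDisc (d : ℤ) : ℕ := if d = -4 then 4 else if d = -3 then 6 else 2

def discr (Q : ℤ × ℤ × ℤ) : ℤ := Q.2.1 ^ 2 - 4 * Q.1 * Q.2.2

lemma discr_actForm (g : Matrix.SpecialLinearGroup (Fin 2) ℤ) (Q : ℤ × ℤ × ℤ) :
    discr (actForm g Q) = discr Q := by
  have hdet := g.property
  rw [Matrix.det_fin_two] at hdet
  simp only [discr, actForm]
  set p := (g : Matrix (Fin 2) (Fin 2) ℤ) 0 0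
  set q := (g : Matrix (Fin 2) (Fin 2) ℤ) 0 1
  set r := (g : Matrix (Fin 2) (Fin 2) ℤ) 1 0
  set s := (g : Matrix (Fin 2) (Fin 2) ℤ) 1 1
  linear_combination (Q.2.1 ^ 2 - 4 * Q.1 * Q.2.2) * (p * s - q * r + 1) * hdet

lemma ProperEquiv.discr_eq {Q Q' : ℤ × ℤ × ℤ} (h : ProperEquiv Q Q') : discr Q = discr Q' := by
  obtain ⟨g, rfl⟩ := h
  exact (discr_actForm g Q).symm

lemma exists_eq_two_mul_of_discr_eq {a b c n : ℤ} (h : discr (a, b, c) = 4 * n) :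
    ∃ k, b = 2 * k ∧ k ^ 2 = a * c + n := by
  have hb2 : b ^ 2 = 2 * (2 * (a * c + n)) := by simp only [discr] at h; linarith
  obtain ⟨k, rfl⟩ : (2 : ℤ) ∣ b := Int.prime_two.dvd_of_dvd_pow (n := 2) ⟨_, hb2⟩
  exact ⟨k, rfl, by linarith⟩

lemma mul_ne_zero_of_sq_eq_mul_add {a b c n : ℤ} (hns : ¬∃ m : ℤ, n = m ^ 2)
    (h : b ^ 2 = a * c + n) : a * c ≠ 0 :=
  fun hac => hns ⟨b, by rw [h, hac, zero_add]⟩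

lemma Int.sqrt_sq_of_nonneg {b : ℤ} (hb : 0 ≤ b) : Int.sqrt (b ^ 2) = b := by
  rw [sq, Int.sqrt_eq, Int.natAbs_of_nonneg hb]

/-- The form `E_{ac}`; as `Int.sqrt` rounds down, it is `[a, 2√(ac+n), c]` only when `ac + n`
is a square. -/
def pairForm (n : ℤ) (ac : ℤ × ℤ) : ℤ × ℤ × ℤ := (ac.1, 2 * Int.sqrt (ac.1 * ac.2 + n), ac.2)

lemma pairForm_eq {n a b c : ℤ} (hb : 0 ≤ b) (h : b ^ 2 = a * c + n) :
    pairForm n (a, c) = (a, 2 * b, c) := by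
  rw [pairForm, ← h, Int.sqrt_sq_of_nonneg hb]

def boundedDPairs (n : ℤ) (Q : ℤ × ℤ × ℤ) (T : ℝ) : Set (ℤ × ℤ) :=
  {ac : ℤ × ℤ | ac.2 < ac.1 ∧ ac.1 ≠ 0 ∧ ac.2 ≠ 0 ∧
    |(ac.1 : ℝ)| ≤ T ∧ |(ac.2 : ℝ)| ≤ T ∧
    ∃ b : ℤ, 0 ≤ b ∧ b ^ 2 = ac.1 * ac.2 + n ∧ ProperEquiv (ac.1, 2 * b, ac.2) Q}

def boundedForms (Q : ℤ × ℤ × ℤ) (T : ℝ) : Set (ℤ × ℤ × ℤ) :=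
  {f : ℤ × ℤ × ℤ | |(f.1 : ℝ)| ≤ T ∧ |(f.2.2 : ℝ)| ≤ T ∧
    f.2.2 < f.1 ∧ 0 ≤ f.2.1 ∧ ProperEquiv f Q}

section

variable {n : ℤ} {Q : ℤ × ℤ × ℤ} {T : ℝ}

lemma mapsTo_pairForm : Set.MapsTo (pairForm n) (boundedDPairs n Q T) (boundedForms Q T) := by
  rintro ⟨a, c⟩ ⟨hlt, -, -, haT, hcT, b, hb, hb2, heq⟩
  rw [pairForm_eq hb hb2]
  exact ⟨haT, hcT, hlt, by positivity, heq⟩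

lemma injective_pairForm : Function.Injective (pairForm n) := by
  rintro ⟨a, c⟩ ⟨a', c'⟩ h
  simp only [pairForm, Prod.mk.injEq] at h
  exact Prod.ext h.1 h.2.2

lemma surjOn_pairForm (hns : ¬∃ m : ℤ, n = m ^ 2) (hdisc : discr Q = 4 * n) :
    Set.SurjOn (pairForm n) (boundedDPairs n Q T) (boundedForms Q T) := by
  rintro ⟨a, b, c⟩ ⟨haT, hcT, hlt, hb, heq⟩
  obtain ⟨k, rfl, hk⟩ := exists_eq_two_mul_of_discr_eq (heq.discr_eq.trans hdisc)
  have hk0 : 0 ≤ k := by linarith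
  obtain ⟨ha, hc⟩ := mul_ne_zero_iff.mp (mul_ne_zero_of_sq_eq_mul_add hns hk)
  exact ⟨(a, c), ⟨hlt, ha, hc, haT, hcT, k, hk0, hk, heq⟩, pairForm_eq hk0 hk⟩

lemma bijOn_pairForm (hns : ¬∃ m : ℤ, n = m ^ 2) (hdisc : discr Q = 4 * n) :
    Set.BijOn (pairForm n) (boundedDPairs n Q T) (boundedForms Q T) :=
  ⟨mapsTo_pairForm, injective_pairForm.injOn, surjOn_pairForm hns hdisc⟩

end

theorem DTQ_eq_FTQ_general (n : ℤ) (hns : ¬∃ m : ℤ, n = m ^ 2)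
    (Q : ℤ × ℤ × ℤ) (hdisc : Q.2.1 ^ 2 - 4 * Q.1 * Q.2.2 = 4 * n)
    (T : ℝ) :
    Set.BijOn (fun ac : ℤ × ℤ => (ac.1, 2 * Int.sqrt (ac.1 * ac.2 + n), ac.2))
        {ac : ℤ × ℤ | ac.2 < ac.1 ∧ ac.1 ≠ 0 ∧ ac.2 ≠ 0 ∧
          |(ac.1 : ℝ)| ≤ T ∧ |(ac.2 : ℝ)| ≤ T ∧
          ∃ b : ℤ, 0 ≤ b ∧ b ^ 2 = ac.1 * ac.2 + n ∧ ProperEquiv (ac.1, 2 * b, ac.2) Q}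
        {f : ℤ × ℤ × ℤ | |(f.1 : ℝ)| ≤ T ∧ |(f.2.2 : ℝ)| ≤ T ∧
          f.2.2 < f.1 ∧ 0 ≤ f.2.1 ∧ ProperEquiv f Q} ∧
      DTQ n Q T = FTQ Q T := by
  have h : Set.BijOn (pairForm n) (boundedDPairs n Q T) (boundedForms Q T) :=
    bijOn_pairForm hns hdisc
  exact ⟨h, h.ncard_eq⟩

/-- For a nonzero nonsquare integer `n` and a form `Q` of discriminant `4n`, the map
`{a,c} ↦ [a, 2√(ac+n), c]` is a bijection between the `D(n)`-pairs counted by `D_T^Q`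
and the forms counted by `F_T^Q`; in particular `D_T^Q = F_T^Q` for every `T > 0`. -/
theorem DTQ_eq_FTQ (n : ℤ) (hn : n ≠ 0) (hns : ¬∃ m : ℤ, n = m ^ 2)
    (Q : ℤ × ℤ × ℤ) (hdisc : Q.2.1 ^ 2 - 4 * Q.1 * Q.2.2 = 4 * n)
    (T : ℝ) (hT : 0 < T) :
    Set.BijOn (fun ac : ℤ × ℤ => (ac.1, 2 * Int.sqrt (ac.1 * ac.2 + n), ac.2))
        {ac : ℤ × ℤ | ac.2 < ac.1 ∧ ac.1 ≠ 0 ∧ ac.2 ≠ 0 ∧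
          |(ac.1 : ℝ)| ≤ T ∧ |(ac.2 : ℝ)| ≤ T ∧
          ∃ b : ℤ, 0 ≤ b ∧ b ^ 2 = ac.1 * ac.2 + n ∧ ProperEquiv (ac.1, 2 * b, ac.2) Q}
        {f : ℤ × ℤ × ℤ | |(f.1 : ℝ)| ≤ T ∧ |(f.2.2 : ℝ)| ≤ T ∧
          f.2.2 < f.1 ∧ 0 ≤ f.2.1 ∧ ProperEquiv f Q} ∧
      DTQ n Q T = FTQ Q T :=
  DTQ_eq_FTQ_general n hns Q hdisc T
end

section
/- For M ≥ 1 define I(M) = ∫_{1/M}^{M} (√(y(M−y)) − √(max(1−y², 0)))/y² dy. Then I(M)/M → 1 as M → ∞; that is, I(M) = M + o(M). -/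
/-!
Both parts of the integrand have elementary antiderivatives on `(0, M)`, resp. `(0, 1)`:
`2 arctan √(M/y - 1) - 2 √(M/y - 1)` for `√(y (M - y)) / y²` and `-√(1 - y²)/y - arcsin y`
for `√(1 - y²) / y²`, while `√(max (1 - y²) 0)` vanishes for `y ≥ 1`. Hence for `M ≥ 1`
`I(M) = √(M² - 1) - 2 arctan √(M² - 1) - arcsin (1/M) + π/2`,
and every term but the first is bounded, while `√(M² - 1) / M → 1`.
-/

open Filter Real MeasureTheory intervalIntegral Set Topology

theorem Real.sqrt_max_zero (x : ℝ) : √(max x 0) = √x := by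
  rcases le_total x 0 with h | h <;> simp [h, sqrt_eq_zero'.2]

theorem sqrt_sq_sub_one_eq_mul {M : ℝ} (hM : 0 < M) : √(M ^ 2 - 1) = M * √(1 - (1 / M) ^ 2) := by
  rw [show 1 - (1 / M) ^ 2 = (M ^ 2 - 1) / M ^ 2 by field_simp, sqrt_div' _ (sq_nonneg M),
    sqrt_sq hM.le]
  field_simp

section Integrals

variable {a b y M : ℝ}

theorem hasDerivAt_arctan_sqrt_div_sub_one (hy : 0 < y) (hyM : y < M) :
    HasDerivAt (fun y => 2 * arctan √(M / y - 1) - 2 * √(M / y - 1))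
      (√(y * (M - y)) / y ^ 2) y := by
  have hu : 0 < M / y - 1 := by rw [sub_pos, lt_div_iff₀ hy]; linarith
  set s := √(M / y - 1) with hs
  have hs0 : s ≠ 0 := (sqrt_pos.mpr hu).ne'
  have hs2 : s ^ 2 = M / y - 1 := sq_sqrt hu.le
  have hds : HasDerivAt (fun y => √(M / y - 1)) (-M / y ^ 2 / (2 * s)) y :=
    ((((hasDerivAt_const y M).div (hasDerivAt_id y) hy.ne').sub_const 1).congr_deriv
      (by simp)).sqrt hu.ne'
  have hsqrt : √(y * (M - y)) = y * s := by
    rw [hs, ← sqrt_sq hy.le, ← sqrt_mul (sq_nonneg y), sqrt_sq hy.le]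
    congr 1
    field_simp
  refine ((hds.arctan.const_mul 2).sub (hds.const_mul 2)).congr_deriv ?_
  have hs2' : 1 + s ^ 2 = M / y := by rw [hs2]; ring
  rw [hsqrt, hs2']
  have hM : M ≠ 0 := by linarith
  field_simp
  rw [hs2]
  field_simp
  ring

theorem hasDerivAt_neg_sqrt_one_sub_sq_div_sub_arcsin (hy : 0 < y) (hy1 : y < 1) :
    HasDerivAt (fun y => -(√(1 - y ^ 2) / y) - arcsin y) (√(1 - y ^ 2) / y ^ 2) y := by
  have hu : 0 < 1 - y ^ 2 := by nlinarith
  set t := √(1 - y ^ 2) with ht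
  have ht0 : t ≠ 0 := (sqrt_pos.mpr hu).ne'
  have hdt : HasDerivAt (fun y => √(1 - y ^ 2)) (-(2 * y) / (2 * t)) y :=
    (((hasDerivAt_pow 2 y).const_sub 1).congr_deriv (by simp)).sqrt hu.ne'
  refine (((hdt.div (hasDerivAt_id y) hy.ne').neg).sub
    (hasDerivAt_arcsin (by linarith) hy1.ne)).congr_deriv ?_
  rw [← ht]
  simp only [id]
  field_simp
  ring

theorem intervalIntegrable_div_sq {f : ℝ → ℝ} (hf : Continuous f) (ha : 0 < a) (hb : 0 < b) :
    IntervalIntegrable (fun y => f y / y ^ 2) volume a b := by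
  refine (hf.continuousOn.div (continuousOn_pow 2) fun y hy => ?_).intervalIntegrable
  have : 0 < y := (lt_min ha hb).trans_le hy.1
  positivity

theorem integral_sqrt_mul_sub_div_sq (ha : 0 < a) (hab : a ≤ b) (hbM : b ≤ M) :
    ∫ y in a..b, √(y * (M - y)) / y ^ 2 =
      (2 * arctan √(M / b - 1) - 2 * √(M / b - 1)) -
        (2 * arctan √(M / a - 1) - 2 * √(M / a - 1)) :=
  integral_eq_sub_of_hasDerivAt_of_le hab
    (by fun_prop (disch := intro y (hy : y ∈ Icc a b); have := ha.trans_le hy.1; positivity))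
    (fun y hy => hasDerivAt_arctan_sqrt_div_sub_one (ha.trans hy.1) (hy.2.trans_le hbM))
    (intervalIntegrable_div_sq (by fun_prop) ha (ha.trans_le hab))

theorem integral_sqrt_one_sub_sq_div_sq (ha : 0 < a) (hab : a ≤ b) (hb1 : b ≤ 1) :
    ∫ y in a..b, √(1 - y ^ 2) / y ^ 2 =
      (-(√(1 - b ^ 2) / b) - arcsin b) - (-(√(1 - a ^ 2) / a) - arcsin a) :=
  integral_eq_sub_of_hasDerivAt_of_le hab
    (by fun_prop (disch := intro y (hy : y ∈ Icc a b); have := ha.trans_le hy.1; positivity))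
    (fun y hy => hasDerivAt_neg_sqrt_one_sub_sq_div_sub_arcsin (ha.trans hy.1)
      (hy.2.trans_le hb1))
    (intervalIntegrable_div_sq (by fun_prop) ha (ha.trans_le hab))

end Integrals

section ClosedForm

variable {M : ℝ}

theorem integral_sqrt_mul_sub_div_sq_one_div (hM : 1 ≤ M) :
    ∫ y in (1 / M)..M, √(y * (M - y)) / y ^ 2 = 2 * √(M ^ 2 - 1) - 2 * arctan √(M ^ 2 - 1) := by
  have hM0 : 0 < M := by linarith
  have hend : M / (1 / M) - 1 = M ^ 2 - 1 := by field_simp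
  rw [integral_sqrt_mul_sub_div_sq (by positivity) ((div_le_one hM0).2 hM |>.trans hM) le_rfl,
    div_self hM0.ne', hend]
  simp

theorem integral_sqrt_one_sub_sq_div_sq_one_div (hM : 1 ≤ M) :
    ∫ y in (1 / M)..M, √(1 - y ^ 2) / y ^ 2 = √(M ^ 2 - 1) + arcsin (1 / M) - π / 2 := by
  have hM0 : 0 < M := by linarith
  have hinv : 0 < 1 / M := by positivity
  -- beyond `y = 1` the radicand is negative, so `√` vanishes there
  have hvanish : ∫ y in (1 : ℝ)..M, √(1 - y ^ 2) / y ^ 2 = 0 := by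
    refine integral_congr (g := fun _ => 0) (fun y hy => ?_) |>.trans integral_zero
    rw [uIcc_of_le hM] at hy
    simp [sqrt_eq_zero'.2 (by nlinarith [hy.1] : 1 - y ^ 2 ≤ 0)]
  have hend : √(1 - (1 / M) ^ 2) / (1 / M) = √(M ^ 2 - 1) := by
    rw [sqrt_sq_sub_one_eq_mul hM0]
    field_simp
  rw [← integral_add_adjacent_intervals (intervalIntegrable_div_sq (by fun_prop) hinv one_pos)
    (intervalIntegrable_div_sq (by fun_prop) one_pos hM0), hvanish, add_zero,
    integral_sqrt_one_sub_sq_div_sq hinv ((div_le_one hM0).2 hM) le_rfl, hend]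
  simp
  ring

theorem integral_volume_definite_eq (hM : 1 ≤ M) :
    ∫ y in (1 / M)..M, (√(y * (M - y)) - √(max (1 - y ^ 2) 0)) / y ^ 2 =
      √(M ^ 2 - 1) - 2 * arctan √(M ^ 2 - 1) - arcsin (1 / M) + π / 2 := by
  have hM0 : 0 < M := by linarith
  have hinv : 0 < 1 / M := by positivity
  simp_rw [sqrt_max_zero, sub_div]
  rw [intervalIntegral.integral_sub (intervalIntegrable_div_sq (by fun_prop) hinv hM0)
    (intervalIntegrable_div_sq (by fun_prop) hinv hM0), integral_sqrt_mul_sub_div_sq_one_div hM,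
    integral_sqrt_one_sub_sq_div_sq_one_div hM]
  ring

end ClosedForm

theorem tendsto_sqrt_sq_sub_one_atTop : Tendsto (fun M : ℝ => √(M ^ 2 - 1)) atTop atTop := by
  simp_rw [sub_eq_add_neg]
  exact tendsto_sqrt_atTop.comp ((tendsto_pow_atTop two_ne_zero).atTop_add tendsto_const_nhds)

theorem tendsto_sqrt_sq_sub_one_div_self :
    Tendsto (fun M : ℝ => √(M ^ 2 - 1) / M) atTop (𝓝 1) := by
  have hinv : Tendsto (fun M : ℝ => 1 / M) atTop (𝓝 0) := tendsto_const_nhds.div_atTop tendsto_id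
  have h : Tendsto (fun M : ℝ => √(1 - (1 / M) ^ 2)) atTop (𝓝 √(1 - 0 ^ 2)) :=
    (continuous_sqrt.tendsto _).comp (tendsto_const_nhds.sub (hinv.pow 2))
  rw [zero_pow two_ne_zero, sub_zero, sqrt_one] at h
  refine h.congr' ?_
  filter_upwards [eventually_gt_atTop 0] with M hM
  rw [sqrt_sq_sub_one_eq_mul hM, mul_div_cancel_left₀ _ hM.ne']

/-- **Lemma 6 (volume in the definite case).** For
`I(M) = ∫_{1/M}^{M} (√(y(M-y)) - √(max(1-y², 0)))/y² dy` one has `I(M)/M → 1` as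
`M → ∞`, i.e. `I(M) = M + o(M)`. -/
theorem volume_definite_asymptotics :
    Filter.Tendsto
      (fun M : ℝ =>
        (∫ y in (1 / M)..M,
          (Real.sqrt (y * (M - y)) - Real.sqrt (max (1 - y ^ 2) 0)) / y ^ 2) / M)
      Filter.atTop (nhds 1) := by
  have hinv : Tendsto (fun M : ℝ => 1 / M) atTop (𝓝 0) := tendsto_const_nhds.div_atTop tendsto_id
  have hremainder : Tendsto (fun M => π / 2 - 2 * arctan √(M ^ 2 - 1) - arcsin (1 / M)) atTop
      (𝓝 (π / 2 - 2 * (π / 2) - arcsin 0)) :=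
    (tendsto_const_nhds.sub (((tendsto_arctan_atTop.mono_right nhdsWithin_le_nhds).comp
      tendsto_sqrt_sq_sub_one_atTop).const_mul 2)).sub ((continuous_arcsin.tendsto 0).comp hinv)
  have := tendsto_sqrt_sq_sub_one_div_self.add (hremainder.div_atTop tendsto_id)
  rw [add_zero] at this
  refine this.congr' ?_
  filter_upwards [eventually_ge_atTop 1] with M hM
  rw [integral_volume_definite_eq hM, id]
  ring
end

section
/- For M > 0 let A(M) denote the two-dimensional Lebesgue measure of the region {(θ, u) ∈ ℝ² : 0 ≤ θ < π/2, u ≥ 0, u + cos θ · √(1 + u²) ≤ M}. Then A(M)/M → 1 as M → ∞; that is, A(M) = M + o(M). -/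
/-!
Because `u ≤ √(1 + u²) ≤ u + 1` and `0 ≤ cos θ ≤ 1`, the constraint `u + cos θ √(1 + u²) ≤ M`
is implied by `u (1 + cos θ) ≤ M - 1` and implies `u (1 + cos θ) ≤ M`. The region
`0 ≤ u ≤ c / (1 + cos θ)` over `0 ≤ θ < π/2` has area `c ∫₀^{π/2} dθ / (1 + cos θ) = c tan (π/4) = c`,
so `M - 1 ≤ A(M) ≤ M`.
-/

open Filter Real MeasureTheory Set

theorem volume_regionBetween_Icc_eq_lintegral {α : Type*} [MeasurableSpace α] {μ : Measure α}
    {f g : α → ℝ} {s : Set α} (hf : Measurable f) (hg : Measurable g) (hs : MeasurableSet s) :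
    μ.prod volume {p : α × ℝ | p.1 ∈ s ∧ p.2 ∈ Icc (f p.1) (g p.1)} =
      ∫⁻ x in s, ENNReal.ofReal (g x - f x) ∂μ := by
  rw [Measure.prod_apply (measurableSet_region_between_cc hf hg hs), ← lintegral_indicator hs]
  congr 1 with x
  by_cases hx : x ∈ s
  · simp only [preimage, mem_ofPred_eq, hx, true_and, indicator_of_mem]
    exact Real.volume_Icc
  · simp [hx]

lemma one_add_cos_eq (θ : ℝ) : 1 + cos θ = 2 * cos (θ / 2) ^ 2 := by
  rw [cos_sq, mul_div_cancel₀ _ two_ne_zero]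
  ring

lemma hasDerivAt_tan_half {θ : ℝ} (hθ : cos (θ / 2) ≠ 0) :
    HasDerivAt (fun x => tan (x / 2)) (1 + cos θ)⁻¹ θ := by
  refine ((hasDerivAt_tan hθ).comp θ ((hasDerivAt_id θ).div_const 2)).congr_deriv ?_
  rw [one_add_cos_eq]
  field_simp

lemma cos_half_pos_of_mem_Icc {θ : ℝ} (hθ : θ ∈ Icc 0 (π / 2)) : 0 < cos (θ / 2) :=
  cos_pos_of_mem_Ioo ⟨by linarith [hθ.1, pi_pos], by linarith [hθ.2, pi_pos]⟩

lemma cos_nonneg_of_mem_Ico {θ : ℝ} (hθ : θ ∈ Ico 0 (π / 2)) : 0 ≤ cos θ :=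
  cos_nonneg_of_mem_Icc ⟨by linarith [hθ.1, pi_pos], hθ.2.le⟩

lemma continuousOn_inv_one_add_cos : ContinuousOn (fun θ => (1 + cos θ)⁻¹) (Icc 0 (π / 2)) :=
  ContinuousOn.inv₀ (by fun_prop) fun θ hθ => by
    simp [one_add_cos_eq, (cos_half_pos_of_mem_Icc hθ).ne']

lemma integral_Ico_inv_one_add_cos : ∫ θ in Ico 0 (π / 2), (1 + cos θ)⁻¹ = 1 := by
  have hIcc : uIcc 0 (π / 2) = Icc 0 (π / 2) := uIcc_of_le (by positivity)
  rw [integral_Ico_eq_integral_Ioo, ← integral_Ioc_eq_integral_Ioo,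
    ← intervalIntegral.integral_of_le (by positivity),
    intervalIntegral.integral_eq_sub_of_hasDerivAt
      (fun θ hθ => hasDerivAt_tan_half (cos_half_pos_of_mem_Icc (hIcc ▸ hθ)).ne')
      (hIcc ▸ continuousOn_inv_one_add_cos).intervalIntegrable]
  norm_num [show π / 2 / 2 = π / 4 by ring]

lemma mul_one_add_le_add_mul_sqrt {u c : ℝ} (hu : 0 ≤ u) (hc : 0 ≤ c) :
    u * (1 + c) ≤ u + c * √(1 + u ^ 2) := by
  have : u ≤ √(1 + u ^ 2) := (le_sqrt hu (by positivity)).2 (by linarith)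
  nlinarith

lemma add_mul_sqrt_le {u c : ℝ} (hu : 0 ≤ u) (hc₀ : 0 ≤ c) (hc₁ : c ≤ 1) :
    u + c * √(1 + u ^ 2) ≤ u * (1 + c) + 1 := by
  have : √(1 + u ^ 2) ≤ 1 + u := (sqrt_le_left (by linarith)).2 (by nlinarith)
  nlinarith

/-- `(θ, u)` are the paper's generalized Cartan coordinates. -/
def cartanRegion (M : ℝ) : Set (ℝ × ℝ) :=
  {p | 0 ≤ p.1 ∧ p.1 < π / 2 ∧ 0 ≤ p.2 ∧ p.2 + cos p.1 * √(1 + p.2 ^ 2) ≤ M}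

def comparisonRegion (c : ℝ) : Set (ℝ × ℝ) :=
  {p | p.1 ∈ Ico 0 (π / 2) ∧ p.2 ∈ Icc 0 (c / (1 + cos p.1))}

lemma mem_comparisonRegion {c : ℝ} {p : ℝ × ℝ} :
    p ∈ comparisonRegion c ↔ p.1 ∈ Ico 0 (π / 2) ∧ 0 ≤ p.2 ∧ p.2 * (1 + cos p.1) ≤ c := by
  refine and_congr_right fun hθ => and_congr_right fun _ => le_div_iff₀ ?_
  linarith [cos_nonneg_of_mem_Ico hθ]

lemma comparisonRegion_sub_one_subset_cartanRegion (M : ℝ) :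
    comparisonRegion (M - 1) ⊆ cartanRegion M := by
  rintro ⟨θ, u⟩ hp
  obtain ⟨hθ, hu, hle⟩ := mem_comparisonRegion.1 hp
  refine ⟨hθ.1, hθ.2, hu, ?_⟩
  linarith [add_mul_sqrt_le hu (cos_nonneg_of_mem_Ico hθ) (cos_le_one θ)]

lemma cartanRegion_subset_comparisonRegion (M : ℝ) : cartanRegion M ⊆ comparisonRegion M := by
  rintro ⟨θ, u⟩ ⟨hθ₀, hθ₁, hu, hle⟩
  have hθ : θ ∈ Ico 0 (π / 2) := ⟨hθ₀, hθ₁⟩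
  exact mem_comparisonRegion.2
    ⟨hθ, hu, by linarith [mul_one_add_le_add_mul_sqrt hu (cos_nonneg_of_mem_Ico hθ)]⟩

lemma volume_comparisonRegion {c : ℝ} (hc : 0 ≤ c) :
    volume (comparisonRegion c) = ENNReal.ofReal c := by
  have hint : IntegrableOn (fun θ => c / (1 + cos θ)) (Ico 0 (π / 2)) := by
    simp_rw [div_eq_mul_inv c]
    exact (continuousOn_inv_one_add_cos.integrableOn_Icc.mono_set Ico_subset_Icc_self).const_mul c
  have hnonneg : ∀ θ ∈ Ico 0 (π / 2), 0 ≤ c / (1 + cos θ) := fun θ hθ =>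
    div_nonneg hc (by linarith [cos_nonneg_of_mem_Ico hθ])
  have hvol := volume_regionBetween_Icc_eq_lintegral (μ := volume) (f := fun _ => 0)
    (g := fun θ => c / (1 + cos θ)) measurable_const (by fun_prop)
    (measurableSet_Ico (a := 0) (b := π / 2))
  simp only [sub_zero] at hvol
  rw [comparisonRegion, Measure.volume_eq_prod, hvol, ← ofReal_integral_eq_lintegral_ofReal hint
    ((ae_restrict_iff' measurableSet_Ico).2 (ae_of_all _ hnonneg))]
  simp_rw [div_eq_mul_inv c]
  rw [integral_const_mul, integral_Ico_inv_one_add_cos, mul_one]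

lemma toReal_volume_cartanRegion_mem_Icc {M : ℝ} (hM : 1 ≤ M) :
    (volume (cartanRegion M)).toReal ∈ Icc (M - 1) M := by
  have hupper : volume (cartanRegion M) ≤ ENNReal.ofReal M :=
    volume_comparisonRegion (by linarith) ▸ measure_mono (cartanRegion_subset_comparisonRegion M)
  have hlower : ENNReal.ofReal (M - 1) ≤ volume (cartanRegion M) :=
    volume_comparisonRegion (sub_nonneg.2 hM) ▸
      measure_mono (comparisonRegion_sub_one_subset_cartanRegion M)
  exact ⟨(ENNReal.ofReal_le_iff_le_toReal (ne_top_of_le_ne_top ENNReal.ofReal_ne_top hupper)).1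
      hlower, ENNReal.toReal_le_of_le_ofReal (by linarith) hupper⟩

/-- **Lemma 7 (volume in the indefinite nonsplit case).** Let `A(M)` be the Lebesgue
measure of `{(θ, u) : 0 ≤ θ < π/2, u ≥ 0, u + cos θ √(1 + u²) ≤ M}`. Then `A(M)/M → 1`
as `M → ∞`, i.e. `A(M) = M + o(M)`. -/
theorem volume_indefinite_asymptotics :
    Filter.Tendsto
      (fun M : ℝ =>
        (MeasureTheory.volume
          {p : ℝ × ℝ | 0 ≤ p.1 ∧ p.1 < Real.pi / 2 ∧ 0 ≤ p.2 ∧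
            p.2 + Real.cos p.1 * Real.sqrt (1 + p.2 ^ 2) ≤ M}).toReal / M)
      Filter.atTop (nhds 1) := by
  change Tendsto (fun M => (volume (cartanRegion M)).toReal / M) atTop (nhds 1)
  have hlim : Tendsto (fun M : ℝ => 1 - M⁻¹) atTop (nhds 1) := by
    simpa using tendsto_inv_atTop_zero.const_sub (1 : ℝ)
  refine tendsto_of_tendsto_of_tendsto_of_le_of_le' hlim tendsto_const_nhds ?_ ?_
  · filter_upwards [eventually_ge_atTop 1] with M hM
    rw [le_div_iff₀ (by linarith), sub_mul, inv_mul_cancel₀ (by linarith), one_mul]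
    exact (toReal_volume_cartanRegion_mem_Icc hM).1
  · filter_upwards [eventually_ge_atTop 1] with M hM
    exact (div_le_one (by linarith)).2 (toReal_volume_cartanRegion_mem_Icc hM).2
end

section
/- Let Q = [a,b,c] be a primitive positive definite integral binary quadratic form of discriminant d = b² − 4ac < 0. Then the number of matrices g ∈ SL₂(ℤ) whose induced substitution fixes Q (that is, Q(px+qy, rx+sy) = Q(x,y) for g = (p q; r s)) equals ω(d), where ω(d) = 4 if d = −4, 6 if d = −3, and 2 otherwise. -/
open Filter Real Asymptotics

/-!
An automorph `g` of `Q = [a, b, c]` satisfies `gᵀ M g = M` for `M = (2a b; b 2c)`; as `det g = 1`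
this is the linear system `M g = g⁻ᵀ M`, and primitivity of `Q` then forces
`g = (k, -cu; au, k + bu)` with `k² + bku + acu² = 1`. The substitution `t = 2k + bu` turns these
pairs `(k, u)` into the solutions of `t² - d u² = 4`. For `d < 0` these are `(±2, 0)`, plus
`(0, ±1)` when `d = -4` and `(±1, ±1)` when `d = -3`.
-/

open scoped MatrixGroups

local notation:1024 "↑ₘ" A:1024 => ((A : SL(2, ℤ)) : Matrix (Fin 2) (Fin 2) ℤ)

lemma discr_emod_four (a b c : ℤ) :
    (b ^ 2 - 4 * a * c) % 4 = 0 ∨ (b ^ 2 - 4 * a * c) % 4 = 1 := by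
  rcases Int.even_or_odd' b with ⟨m, rfl | rfl⟩ <;> ring_nf <;> omega

lemma dvd_of_dvd_mul_of_gcd_eq_one {a b c r : ℤ} (hprim : Int.gcd a (Int.gcd b c) = 1)
    (hb : a ∣ b * r) (hc : a ∣ c * r) : a ∣ r := by
  refine (Int.isCoprime_iff_gcd_eq_one.mpr hprim).dvd_of_dvd_mul_right ?_
  rw [Int.gcd_eq_gcd_ab b c, mul_add, ← mul_assoc, ← mul_assoc, mul_comm r b, mul_comm r c]
  exact dvd_add (dvd_mul_of_dvd_left hb _) (dvd_mul_of_dvd_left hc _)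

section Stabilizer

variable {a b c : ℤ}

lemma det_coe_fin_two_eq_one (g : SL(2, ℤ)) :
    ↑ₘg 0 0 * ↑ₘg 1 1 - ↑ₘg 0 1 * ↑ₘg 1 0 = 1 := by
  rw [← Matrix.det_fin_two]; exact g.2

lemma linear_relations_of_actForm_eq_self {g : SL(2, ℤ)} (hg : actForm g (a, b, c) = (a, b, c)) :
    a * ↑ₘg 0 1 + c * ↑ₘg 1 0 = 0 ∧ a * (↑ₘg 0 0 - ↑ₘg 1 1) + b * ↑ₘg 1 0 = 0 := by
  have hdet := det_coe_fin_two_eq_one g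
  simp only [actForm, Prod.mk.injEq] at hg
  obtain ⟨e1, e2, e3⟩ := hg
  constructor
  · have : 2 * (a * ↑ₘg 0 1 + c * ↑ₘg 1 0) = 0 := by
      linear_combination
        ↑ₘg 1 1 * e2 - 2 * ↑ₘg 1 0 * e3 - (2 * a * ↑ₘg 0 1 + b * ↑ₘg 1 1) * hdet
    omega
  · have : 2 * (a * (↑ₘg 0 0 - ↑ₘg 1 1) + b * ↑ₘg 1 0) = 0 := by
      linear_combination
        2 * ↑ₘg 1 1 * e1 - ↑ₘg 1 0 * e2 - (2 * a * ↑ₘg 0 0 + b * ↑ₘg 1 0) * hdet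
    omega

def automorph (a b c k u : ℤ) : Matrix (Fin 2) (Fin 2) ℤ := !![k, -(c * u); a * u, k + b * u]

def automorphParams (a b c : ℤ) : Set (ℤ × ℤ) :=
  {ku | ku.1 ^ 2 + b * ku.1 * ku.2 + a * c * ku.2 ^ 2 = 1}

lemma det_automorph (k u : ℤ) :
    (automorph a b c k u).det = k ^ 2 + b * k * u + a * c * u ^ 2 := by
  rw [automorph, Matrix.det_fin_two_of]; ring

lemma exists_eq_automorph_of_actForm_eq_self (ha : a ≠ 0) (hprim : Int.gcd a (Int.gcd b c) = 1)
    {g : SL(2, ℤ)} (hg : actForm g (a, b, c) = (a, b, c)) :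
    ∃ u, ↑ₘg = automorph a b c (↑ₘg 0 0) u := by
  obtain ⟨hA, hE⟩ := linear_relations_of_actForm_eq_self hg
  obtain ⟨u, hr⟩ : a ∣ ↑ₘg 1 0 := dvd_of_dvd_mul_of_gcd_eq_one hprim
    ⟨↑ₘg 1 1 - ↑ₘg 0 0, by linear_combination hE⟩ ⟨-↑ₘg 0 1, by linear_combination hA⟩
  have hq : ↑ₘg 0 1 = -(c * u) := mul_left_cancel₀ ha (by linear_combination hA - c * hr)
  have hs : ↑ₘg 1 1 = ↑ₘg 0 0 + b * u :=
    mul_left_cancel₀ ha (by linear_combination -hE + b * hr)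
  exact ⟨u, by rw [automorph, ← hq, ← hr, ← hs]; exact Matrix.eta_fin_two _⟩

lemma actForm_eq_self_of_eq_automorph {g : SL(2, ℤ)} {k u : ℤ}
    (hg : ↑ₘg = automorph a b c k u) : actForm g (a, b, c) = (a, b, c) := by
  have hdet : k ^ 2 + b * k * u + a * c * u ^ 2 = 1 := by rw [← det_automorph, ← hg, g.2]
  simp only [actForm, hg, automorph, Matrix.of_apply, Matrix.cons_val', Matrix.cons_val_zero,
    Matrix.cons_val_one, Matrix.empty_val', Matrix.cons_val_fin_one, Prod.mk.injEq]
  exact ⟨by linear_combination a * hdet, by linear_combination b * hdet,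
    by linear_combination c * hdet⟩

lemma ncard_stabilizer_eq_ncard_automorphParams (ha : a ≠ 0)
    (hprim : Int.gcd a (Int.gcd b c) = 1) :
    {g : SL(2, ℤ) | actForm g (a, b, c) = (a, b, c)}.ncard = (automorphParams a b c).ncard := by
  refine (Set.ncard_congr
    (fun ku hku => ⟨automorph a b c ku.1 ku.2, by rw [det_automorph]; exact hku⟩)
    (fun ku _ => actForm_eq_self_of_eq_automorph rfl) ?_ ?_).symm
  · rintro ⟨k, u⟩ ⟨k', u'⟩ _ _ h
    have h' := congrArg Subtype.val h
    have hk : k = k' := congrFun (congrFun h' 0) 0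
    have hu : a * u = a * u' := congrFun (congrFun h' 1) 0
    rw [hk, mul_left_cancel₀ ha hu]
  · intro g hg
    obtain ⟨u, hu⟩ := exists_eq_automorph_of_actForm_eq_self ha hprim hg
    refine ⟨(↑ₘg 0 0, u), ?_, Subtype.ext hu.symm⟩
    rw [automorphParams, Set.mem_ofPred_eq, ← det_automorph, ← hu, g.2]

def normFourSolutions (d : ℤ) : Set (ℤ × ℤ) := {tu | tu.1 ^ 2 - d * tu.2 ^ 2 = 4}

lemma ncard_automorphParams_eq_ncard_normFourSolutions :
    (automorphParams a b c).ncard = (normFourSolutions (b ^ 2 - 4 * a * c)).ncard := by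
  have hinj : Function.Injective fun ku : ℤ × ℤ => (2 * ku.1 + b * ku.2, ku.2) := by
    rintro ⟨k, u⟩ ⟨k', u'⟩ h
    obtain ⟨hk, rfl⟩ := Prod.mk.inj h
    simp only [Prod.mk.injEq, and_true]
    linarith
  rw [← Set.ncard_image_of_injective _ hinj]
  congr 1
  ext ⟨t, u⟩
  simp only [Set.mem_image, Prod.exists, Prod.mk.injEq, automorphParams, normFourSolutions,
    Set.mem_ofPred_eq]
  constructor
  · rintro ⟨k, u, hku, rfl, rfl⟩
    linear_combination 4 * hku
  · intro htu
    have hsq : Even (t ^ 2 - (b * u) ^ 2) :=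
      ⟨2 * (1 - a * c * u ^ 2), by linear_combination htu⟩
    obtain ⟨k, hk⟩ : Even (t - b * u) := by
      simpa [Int.even_sub, Int.even_pow] using hsq
    obtain rfl : t = 2 * k + b * u := by omega
    refine ⟨k, u, mul_left_cancel₀ (four_ne_zero (α := ℤ)) ?_, rfl, rfl⟩
    linear_combination htu

end Stabilizer

lemma normFourSolutions_eq_filter {d : ℤ} (hd : d ≤ -3) :
    normFourSolutions d = ↑((Finset.Icc (-2) 2 ×ˢ Finset.Icc (-1) 1).filter
      fun tu : ℤ × ℤ => tu.1 ^ 2 - d * tu.2 ^ 2 = 4) := by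
  ext ⟨t, u⟩
  simp only [normFourSolutions, Set.mem_ofPred_eq, Finset.coe_filter, Finset.mem_product,
    Finset.mem_Icc]
  constructor
  · intro h
    refine ⟨⟨⟨?_, ?_⟩, ?_, ?_⟩, h⟩ <;> nlinarith [sq_nonneg t, sq_nonneg u]
  · exact And.right

lemma ncard_normFourSolutions_neg_four : (normFourSolutions (-4)).ncard = 4 := by
  rw [normFourSolutions_eq_filter (by norm_num), Set.ncard_coe_finset]
  decide

lemma ncard_normFourSolutions_neg_three : (normFourSolutions (-3)).ncard = 6 := by
  rw [normFourSolutions_eq_filter (by norm_num), Set.ncard_coe_finset]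
  decide

lemma normFourSolutions_of_le_neg_five {d : ℤ} (hd : d ≤ -5) :
    normFourSolutions d = {(2, 0), (-2, 0)} := by
  ext ⟨t, u⟩
  simp only [normFourSolutions, Set.mem_ofPred_eq, Set.mem_insert_iff, Set.mem_singleton_iff,
    Prod.mk.injEq]
  constructor
  · intro h
    obtain rfl : u = 0 := by
      by_contra hu
      nlinarith [sq_nonneg t, pow_pos (abs_pos.mpr hu) 2, sq_abs u]
    have ht : t ^ 2 = 2 ^ 2 := by linear_combination h
    rcases sq_eq_sq_iff_eq_or_eq_neg.mp ht with rfl | rfl <;> simp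
  · rintro (⟨rfl, rfl⟩ | ⟨rfl, rfl⟩) <;> norm_num

lemma ncard_normFourSolutions {d : ℤ} (hd : d < 0) (hdisc : d % 4 = 0 ∨ d % 4 = 1) :
    (normFourSolutions d).ncard = omegaDisc d := by
  by_cases h4 : d = -4
  · rw [h4, ncard_normFourSolutions_neg_four]; rfl
  by_cases h3 : d = -3
  · rw [h3, ncard_normFourSolutions_neg_three]; rfl
  rw [normFourSolutions_of_le_neg_five (by omega), Set.ncard_pair (by decide), omegaDisc,
    if_neg h4, if_neg h3]

/-- **Automorphs of a definite form.** For a primitive positive definite integral binary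
quadratic form `Q = [a,b,c]` of discriminant `d = b² - 4ac < 0`, the number of
`g ∈ SL₂(ℤ)` fixing `Q` under the substitution action equals `ω(d)` (`4` if `d = -4`,
`6` if `d = -3`, `2` otherwise). -/
theorem card_stabilizer_definite (a b c : ℤ) (ha : 0 < a) (hd : b ^ 2 - 4 * a * c < 0)
    (hprim : Int.gcd a (Int.gcd b c) = 1) :
    Set.ncard {g : Matrix.SpecialLinearGroup (Fin 2) ℤ | actForm g (a, b, c) = (a, b, c)} =
      omegaDisc (b ^ 2 - 4 * a * c) := by
  rw [ncard_stabilizer_eq_ncard_automorphParams ha.ne' hprim,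
    ncard_automorphParams_eq_ncard_normFourSolutions,
    ncard_normFourSolutions hd (discr_emod_four a b c)]
end

section
/- Let Q = [a,b,c] be a primitive indefinite integral binary quadratic form whose discriminant d = b² − 4ac > 0 is not a perfect square, and let (t,s) be the minimal solution in positive integers of t² − d·s² = 4. Set T₀ = ((t−bs)/2, −cs; as, (t+bs)/2) ∈ SL₂(ℤ). Then T₀ has infinite order, and the stabilizer of Q in SL₂(ℤ) (under the substitution action) is exactly the set {± T₀^m : m ∈ ℤ}; in particular it is isomorphic to ℤ/2ℤ × ℤ, generated by −I and T₀. -/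
/-!
By primitivity, an automorph of `[a, b, c]` must be of the form `p + w N` with
`N = !![0, -c; a, b]` and `p² + b p w + a c w² = 1`, so the stabilizer is the group of norm-one
elements of `ℤ[N] ≅ ℤ[(b + √d) / 2]`. Sending `N ↦ θ = (b + √d) / 2` embeds it multiplicatively
into `ℝ`; the elements with image `> 1` are those of positive trace `u` and positive `w`, i.e. the
positive solutions `(u, w)` of `u² - d w² = 4`, and their image is `(u + w √d) / 2`. Minimality
of `t` makes `(t + s √d) / 2`, the image of `T₀`, the least image `> 1`, so by the Archimedean
property every element with positive image is a power of `T₀`, and every element is `± T₀ ^ m`.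
-/

open Filter Real Asymptotics

open scoped MatrixGroups

theorem map_zpow_of_group {G M₀ : Type*} [Group G] [GroupWithZero M₀] (f : G →* M₀) (g : G)
    (n : ℤ) : f (g ^ n) = f g ^ n :=
  map_zpow' f (fun _ ↦ eq_inv_of_mul_eq_one_left (by rw [← map_mul, inv_mul_cancel, map_one])) g n

section OrderedField

variable {K : Type*} [Field K] [LinearOrder K] [IsStrictOrderedRing K]

theorem le_of_add_inv_le_add_inv {x y : K} (hx : 1 ≤ x) (hy : 1 ≤ y) (h : x + x⁻¹ ≤ y + y⁻¹) :
    x ≤ y := by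
  by_contra! hlt
  have hxy : 1 < x * y := by nlinarith
  have hdiff : x + x⁻¹ - (y + y⁻¹) = (x - y) * (x * y - 1) / (x * y) := by field_simp; ring
  have : 0 < (x - y) * (x * y - 1) / (x * y) := by
    apply div_pos (mul_pos _ _) _ <;> linarith
  linarith

variable {G : Type*} [Group G] (ε : G →* K)

theorem zpow_ne_one_of_one_lt_map {T : G} (hT : 1 < ε T) {m : ℤ} (hm : m ≠ 0) : T ^ m ≠ 1 := by
  intro h
  have := map_zpow_of_group ε T m
  rw [h, map_one, eq_comm, zpow_eq_one_iff_right₀ (by linarith) hT.ne'] at this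
  exact hm this

theorem exists_eq_zpow_of_pos_map [Archimedean K] (hker : ∀ g, ε g = 1 → g = 1) {T : G}
    (hT : 1 < ε T) (hmin : ∀ g, 1 < ε g → ε T ≤ ε g) {g : G} (hg : 0 < ε g) :
    ∃ n : ℤ, g = T ^ n := by
  obtain ⟨n, hlo, hhi⟩ := exists_mem_Ico_zpow hg hT
  have hpos : 0 < ε T ^ n := zpow_pos (by linarith) n
  have hquot : ε (g * T ^ (-n)) = ε g / ε T ^ n := by
    rw [map_mul, map_zpow_of_group, zpow_neg, div_eq_mul_inv]
  have hlo' : 1 ≤ ε (g * T ^ (-n)) := by rwa [hquot, one_le_div hpos]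
  have hhi' : ε (g * T ^ (-n)) < ε T := by
    rwa [hquot, div_lt_iff₀ hpos, ← zpow_one_add₀ (by positivity), add_comm]
  have hone := hker _ (hlo'.eq_or_lt.resolve_right fun h ↦ (hmin _ h).not_gt hhi').symm
  rw [zpow_neg, mul_inv_eq_one] at hone
  exact ⟨n, hone⟩

end OrderedField

/-- `g = p + w N` with `p = g 0 0` and `N = !![0, -c; a, b]`. -/
def IsAutomorphShape (a b c : ℤ) (g : SL(2, ℤ)) (w : ℤ) : Prop :=
  g 1 0 = a * w ∧ g 0 1 = -(c * w) ∧ g 1 1 = g 0 0 + b * w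

namespace IsAutomorphShape

variable {a b c v w : ℤ} {g h : SL(2, ℤ)}

theorem mul (hg : IsAutomorphShape a b c g v) (hh : IsAutomorphShape a b c h w) :
    IsAutomorphShape a b c (g * h) (v * h 0 0 + g 0 0 * w + b * v * w) := by
  obtain ⟨hg10, hg01, hg11⟩ := hg
  obtain ⟨hh10, hh01, hh11⟩ := hh
  refine ⟨?_, ?_, ?_⟩ <;>
    simp only [Matrix.SpecialLinearGroup.coe_mul, Matrix.mul_apply, Fin.sum_univ_two,
      hg10, hg01, hg11, hh10, hh01, hh11] <;> ring

theorem inv (hg : IsAutomorphShape a b c g w) : IsAutomorphShape a b c g⁻¹ (-w) := by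
  obtain ⟨hg10, hg01, hg11⟩ := hg
  refine ⟨?_, ?_, ?_⟩ <;>
    simp only [Matrix.SpecialLinearGroup.SL2_inv_expl, Matrix.cons_val', Matrix.cons_val_zero,
      Matrix.cons_val_one, Matrix.empty_val', Matrix.cons_val_fin_one, hg10, hg01, hg11] <;> ring

theorem neg (hg : IsAutomorphShape a b c g w) : IsAutomorphShape a b c (-g) (-w) := by
  obtain ⟨hg10, hg01, hg11⟩ := hg
  refine ⟨?_, ?_, ?_⟩ <;>
    simp only [Matrix.SpecialLinearGroup.coe_neg, Matrix.neg_apply, hg10, hg01, hg11] <;> ring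

theorem norm_eq_one (hg : IsAutomorphShape a b c g w) :
    g 0 0 ^ 2 + b * g 0 0 * w + a * c * w ^ 2 = 1 := by
  obtain ⟨h10, h01, h11⟩ := hg
  have hdet := g.2
  rw [Matrix.det_fin_two, h10, h01, h11] at hdet
  linear_combination hdet

end IsAutomorphShape

def automorphGroup (a b c : ℤ) : Subgroup SL(2, ℤ) where
  carrier := {g | ∃ w, IsAutomorphShape a b c g w}
  one_mem' := ⟨0, by simp [IsAutomorphShape]⟩
  mul_mem' := fun ⟨_, hg⟩ ⟨_, hh⟩ ↦ ⟨_, hg.mul hh⟩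
  inv_mem' := fun ⟨_, hg⟩ ↦ ⟨_, hg.inv⟩

section Stabilizer

variable {a b c : ℤ}

theorem actForm_eq_of_mem_automorphGroup {g : SL(2, ℤ)} (hg : g ∈ automorphGroup a b c) :
    actForm g (a, b, c) = (a, b, c) := by
  obtain ⟨w, hw⟩ := hg
  have hN := hw.norm_eq_one
  obtain ⟨h10, h01, h11⟩ := hw
  simp only [actForm, h10, h01, h11, Prod.mk.injEq]
  exact ⟨by linear_combination a * hN, by linear_combination b * hN, by linear_combination c * hN⟩

theorem exists_add_add_eq_one_of_gcd_eq_one (h : Int.gcd a (Int.gcd b c) = 1) :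
    ∃ x y z : ℤ, a * x + b * y + c * z = 1 := by
  obtain ⟨u, v, huv⟩ := Int.isCoprime_iff_gcd_eq_one.mpr h
  exact ⟨u, v * b.gcdA c, v * b.gcdB c, by rw [← huv, Int.gcd_eq_gcd_ab b c]; ring⟩

/-- If `g = !![P, Q; R, S]` preserves the Gram matrix `M = !![2a, b; b, 2c]`, then `M g = g⁻ᵀ M`;
these are the entries of that identity. -/
theorem automorph_relations {P Q R S : ℤ} (hdet : P * S - Q * R = 1)
    (e1 : a * P ^ 2 + b * P * R + c * R ^ 2 = a)
    (e2 : 2 * a * P * Q + b * (P * S + Q * R) + 2 * c * R * S = b)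
    (e3 : a * Q ^ 2 + b * Q * S + c * S ^ 2 = c) :
    a * Q = -(c * R) ∧ b * R = a * (S - P) ∧ b * Q = -(c * (S - P)) := by
  refine ⟨mul_left_cancel₀ two_ne_zero ?_, mul_left_cancel₀ two_ne_zero ?_,
    mul_left_cancel₀ two_ne_zero ?_⟩
  · linear_combination S * e2 - 2 * R * e3 - (2 * a * Q + b * S) * hdet
  · linear_combination 2 * S * e1 - R * e2 - (2 * a * P + b * R) * hdet
  · linear_combination -Q * e2 + 2 * P * e3 - (b * Q + 2 * c * S) * hdet

theorem mem_automorphGroup_of_actForm_eq (hprim : Int.gcd a (Int.gcd b c) = 1) {g : SL(2, ℤ)}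
    (hg : actForm g (a, b, c) = (a, b, c)) : g ∈ automorphGroup a b c := by
  obtain ⟨x, y, z, hbez⟩ := exists_add_add_eq_one_of_gcd_eq_one hprim
  have hdet : g 0 0 * g 1 1 - g 0 1 * g 1 0 = 1 := by rw [← Matrix.det_fin_two]; exact g.2
  simp only [actForm, Prod.mk.injEq] at hg
  obtain ⟨hX, hY, hZ⟩ := automorph_relations hdet hg.1 hg.2.1 hg.2.2
  refine ⟨x * g 1 0 + y * (g 1 1 - g 0 0) - z * g 0 1, ?_, ?_, ?_⟩
  · linear_combination -g 1 0 * hbez + y * hY + z * hX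
  · linear_combination -g 0 1 * hbez + x * hX + y * hZ
  · linear_combination -(g 1 1 - g 0 0) * hbez - x * hY + z * hZ

theorem setOf_actForm_eq_eq_automorphGroup (hprim : Int.gcd a (Int.gcd b c) = 1) :
    {g | actForm g (a, b, c) = (a, b, c)} = automorphGroup a b c :=
  Set.ext fun _ ↦ ⟨mem_automorphGroup_of_actForm_eq hprim, actForm_eq_of_mem_automorphGroup⟩

end Stabilizer

/- `θ` is the larger root of `X² - b X + a c`; the conjugate of `p + w θ` is `p + w (b - θ)`, and
their product is the norm `p² + b p w + a c w²`. -/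

section QuadraticUnit

variable {a b c p w : ℤ} {θ : ℝ}

theorem unit_mul_conj (hθ : θ ^ 2 = b * θ - a * c) (hN : p ^ 2 + b * p * w + a * c * w ^ 2 = 1) :
    ((p : ℝ) + w * θ) * (p + w * (b - θ)) = 1 := by
  have hN' : ((p ^ 2 + b * p * w + a * c * w ^ 2 : ℤ) : ℝ) = 1 := by exact_mod_cast hN
  push_cast at hN'
  linear_combination hN' - (w : ℝ) ^ 2 * hθ

theorem unit_add_inv (hθ : θ ^ 2 = b * θ - a * c) (hN : p ^ 2 + b * p * w + a * c * w ^ 2 = 1) :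
    ((p : ℝ) + w * θ) + ((p : ℝ) + w * θ)⁻¹ = ((2 * p + b * w : ℤ) : ℝ) := by
  rw [inv_eq_of_mul_eq_one_right (unit_mul_conj hθ hN)]
  push_cast
  ring

theorem one_lt_unit_iff (hθ : θ ^ 2 = b * θ - a * c) (hθb : (b : ℝ) < 2 * θ)
    (hN : p ^ 2 + b * p * w + a * c * w ^ 2 = 1) :
    1 < (p : ℝ) + w * θ ↔ 0 < 2 * p + b * w ∧ 0 < w := by
  have hprod := unit_mul_conj hθ hN
  have hdiff : ((p : ℝ) + w * θ) - (p + w * (b - θ)) = w * (2 * θ - b) := by ring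
  have hsum : ((p : ℝ) + w * θ) + (p + w * (b - θ)) = ((2 * p + b * w : ℤ) : ℝ) := by
    push_cast
    ring
  constructor
  · intro h
    have hconj : 0 < (p : ℝ) + w * (b - θ) := by nlinarith
    have hconj' : (p : ℝ) + w * (b - θ) < 1 := by nlinarith
    refine ⟨by exact_mod_cast (show (0 : ℝ) < ((2 * p + b * w : ℤ) : ℝ) by linarith), ?_⟩
    have : (0 : ℝ) < w * (2 * θ - b) := by linarith
    exact_mod_cast pos_of_mul_pos_left this (by linarith)
  · rintro ⟨hu, hw⟩
    have hu' : (0 : ℝ) < ((2 * p + b * w : ℤ) : ℝ) := by exact_mod_cast hu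
    have hw' : (0 : ℝ) < w * (2 * θ - b) := mul_pos (by exact_mod_cast hw) (by linarith)
    nlinarith

theorem eq_zero_of_unit_eq_one (hθ : θ ^ 2 = b * θ - a * c) (hθb : (b : ℝ) < 2 * θ)
    (hN : p ^ 2 + b * p * w + a * c * w ^ 2 = 1) (h : (p : ℝ) + w * θ = 1) : w = 0 := by
  have hconj := unit_mul_conj hθ hN
  rw [h, one_mul] at hconj
  have : (w : ℝ) * (2 * θ - b) = 0 := by linear_combination h - hconj
  exact_mod_cast (mul_eq_zero.mp this).resolve_right (by linarith)

end QuadraticUnit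

section Embedding

variable {a b c w : ℤ} {θ : ℝ}

theorem automorph_coord_eq (ha : a ≠ 0) {g : SL(2, ℤ)} (hg : IsAutomorphShape a b c g w) :
    (g 0 0 : ℝ) + (g 1 0 : ℝ) / a * θ = g 0 0 + w * θ := by
  rw [hg.1, Int.cast_mul, mul_div_cancel_left₀ _ (by exact_mod_cast ha)]

/-- `p + w N ↦ p + w θ`, i.e. `N ↦ θ`, for a root `θ` of the characteristic polynomial
`X² - b X + a c` of `N`. -/
noncomputable def automorphEmbedding (a b c : ℤ) (θ : ℝ) (ha : a ≠ 0)
    (hθ : θ ^ 2 = b * θ - a * c) : automorphGroup a b c →* ℝ where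
  toFun g := ((g : SL(2, ℤ)) 0 0 : ℝ) + ((g : SL(2, ℤ)) 1 0 : ℝ) / a * θ
  map_one' := by simp
  map_mul' g h := by
    obtain ⟨v, hg⟩ := g.2
    obtain ⟨w, hh⟩ := h.2
    simp only [Subgroup.coe_mul, automorph_coord_eq ha hg, automorph_coord_eq ha hh,
      automorph_coord_eq ha (hg.mul hh)]
    simp only [Matrix.SpecialLinearGroup.coe_mul, Matrix.mul_apply, Fin.sum_univ_two, hg.2.1,
      hh.1]
    push_cast
    linear_combination -(v : ℝ) * w * hθ

variable {ha : a ≠ 0} {hθ : θ ^ 2 = b * θ - a * c}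

theorem automorphEmbedding_apply (g : automorphGroup a b c) (hg : IsAutomorphShape a b c g w) :
    automorphEmbedding a b c θ ha hθ g = g.1 0 0 + w * θ :=
  automorph_coord_eq ha hg

theorem eq_one_of_automorphEmbedding_eq_one (hθb : (b : ℝ) < 2 * θ) (g : automorphGroup a b c)
    (h : automorphEmbedding a b c θ ha hθ g = 1) : g = 1 := by
  obtain ⟨w, hg⟩ := g.2
  rw [automorphEmbedding_apply g hg] at h
  obtain rfl : w = 0 := eq_zero_of_unit_eq_one hθ hθb hg.norm_eq_one h
  have h00 : g.1 0 0 = 1 := by exact_mod_cast (by simpa using h : ((g.1 0 0 : ℤ) : ℝ) = 1)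
  obtain ⟨h10, h01, h11⟩ := hg
  ext i j
  fin_cases i <;> fin_cases j <;> simp_all

theorem automorphEmbedding_le_of_one_lt (hθb : (b : ℝ) < 2 * θ) {T g : automorphGroup a b c}
    (hmin : ∀ t' s' : ℤ, 0 < t' → 0 < s' → t' ^ 2 - (b ^ 2 - 4 * a * c) * s' ^ 2 = 4 →
      T.1 0 0 + T.1 1 1 ≤ t')
    (hT : 1 < automorphEmbedding a b c θ ha hθ T) (hg : 1 < automorphEmbedding a b c θ ha hθ g) :
    automorphEmbedding a b c θ ha hθ T ≤ automorphEmbedding a b c θ ha hθ g := by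
  obtain ⟨v, hTv⟩ := T.2
  obtain ⟨w, hgw⟩ := g.2
  rw [automorphEmbedding_apply T hTv] at hT ⊢
  rw [automorphEmbedding_apply g hgw] at hg ⊢
  obtain ⟨hu, hw⟩ := (one_lt_unit_iff hθ hθb hgw.norm_eq_one).1 hg
  have htrace : 2 * T.1 0 0 + b * v ≤ 2 * g.1 0 0 + b * w := by
    have := hmin _ _ hu hw (by linear_combination 4 * hgw.norm_eq_one)
    rw [hTv.2.2] at this
    linarith
  apply le_of_add_inv_le_add_inv hT.le hg.le
  rw [unit_add_inv hθ hTv.norm_eq_one, unit_add_inv hθ hgw.norm_eq_one]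
  exact_mod_cast htrace

end Embedding

theorem zpow_ne_one_and_mem_automorphGroup_iff {a b c s : ℤ} (ha : a ≠ 0)
    (hd : 0 < b ^ 2 - 4 * a * c) {T₀ : SL(2, ℤ)} (hT₀ : IsAutomorphShape a b c T₀ s) (hs : 0 < s)
    (htrace : 0 < T₀ 0 0 + T₀ 1 1)
    (hmin : ∀ t' s' : ℤ, 0 < t' → 0 < s' → t' ^ 2 - (b ^ 2 - 4 * a * c) * s' ^ 2 = 4 →
      T₀ 0 0 + T₀ 1 1 ≤ t') :
    (∀ m : ℤ, m ≠ 0 → T₀ ^ m ≠ 1) ∧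
      ∀ g, g ∈ automorphGroup a b c ↔ ∃ m : ℤ, g = T₀ ^ m ∨ g = -T₀ ^ m := by
  obtain ⟨θ, hθ, hθb⟩ : ∃ θ : ℝ, θ ^ 2 = b * θ - a * c ∧ (b : ℝ) < 2 * θ := by
    have hd' : (0 : ℝ) < b ^ 2 - 4 * a * c := by exact_mod_cast hd
    refine ⟨(b + √(b ^ 2 - 4 * a * c)) / 2, ?_, by linarith [Real.sqrt_pos.2 hd']⟩
    linear_combination Real.sq_sqrt hd'.le / 4
  set ε := automorphEmbedding a b c θ ha hθ
  have hT₀mem : T₀ ∈ automorphGroup a b c := ⟨s, hT₀⟩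
  set T : automorphGroup a b c := ⟨T₀, hT₀mem⟩
  have hT : 1 < ε T := by
    rw [automorphEmbedding_apply T hT₀]
    refine (one_lt_unit_iff hθ hθb hT₀.norm_eq_one).2 ⟨?_, hs⟩
    linarith [hT₀.2.2]
  have hmin' (g) (hg : 1 < ε g) : ε T ≤ ε g := automorphEmbedding_le_of_one_lt hθb hmin hT hg
  have hker : ∀ g, ε g = 1 → g = 1 := eq_one_of_automorphEmbedding_eq_one hθb
  refine ⟨fun m hm h ↦ zpow_ne_one_of_one_lt_map ε hT hm (Subtype.ext (by simpa using h)),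
    fun g ↦ ⟨?_, ?_⟩⟩
  · rintro ⟨w, hg⟩
    rcases (left_ne_zero_of_mul_eq_one (unit_mul_conj hθ hg.norm_eq_one)).lt_or_gt with hneg | hpos
    · obtain ⟨m, hm⟩ := exists_eq_zpow_of_pos_map ε hker hT hmin' (g := ⟨-g, -w, hg.neg⟩) (by
        rw [automorphEmbedding_apply _ hg.neg]
        simp only [Matrix.SpecialLinearGroup.coe_neg, Matrix.neg_apply, Int.cast_neg]
        linarith)
      exact ⟨m, Or.inr (by rw [← neg_neg g]; exact congrArg (fun x ↦ -x.1) hm)⟩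
    · obtain ⟨m, hm⟩ := exists_eq_zpow_of_pos_map ε hker hT hmin' (g := ⟨g, w, hg⟩) (by
        rwa [automorphEmbedding_apply _ hg])
      exact ⟨m, Or.inl (congrArg Subtype.val hm)⟩
  · rintro ⟨m, rfl | rfl⟩
    · exact zpow_mem hT₀mem m
    · obtain ⟨w, hw⟩ := zpow_mem hT₀mem m
      exact ⟨-w, hw.neg⟩

theorem even_sub_of_pell {a b c t s : ℤ} (h : t ^ 2 - (b ^ 2 - 4 * a * c) * s ^ 2 = 4) :
    Even (t - b * s) := by
  have : Even ((t - b * s) * (t - b * s + 2 * (b * s))) :=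
    ⟨2 - 2 * a * c * s ^ 2, by linear_combination h⟩
  rcases Int.even_mul.mp this with h | h
  · exact h
  · exact (Int.even_add.mp h).mpr (even_two_mul _)

theorem exists_automorph_of_pell {a b c t s : ℤ} (h : t ^ 2 - (b ^ 2 - 4 * a * c) * s ^ 2 = 4) :
    ∃ T₀ : SL(2, ℤ),
      (T₀ : Matrix (Fin 2) (Fin 2) ℤ) = !![(t - b * s) / 2, -c * s; a * s, (t + b * s) / 2] ∧
      IsAutomorphShape a b c T₀ s ∧ T₀ 0 0 + T₀ 1 1 = t := by
  obtain ⟨p, hp⟩ := even_sub_of_pell h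
  have hN : p ^ 2 + b * p * s + a * c * s ^ 2 = 1 :=
    mul_left_cancel₀ four_ne_zero (by linear_combination h - (t + b * s + 2 * p) * hp)
  refine ⟨⟨!![p, -c * s; a * s, p + b * s], by rw [Matrix.det_fin_two_of]; linear_combination hN⟩,
    ?_, ?_, ?_⟩
  · ext i j
    fin_cases i <;> fin_cases j <;> simp <;> omega
  · refine ⟨?_, ?_, ?_⟩ <;> simp
  · simp only [Matrix.of_apply, Matrix.cons_val', Matrix.cons_val_zero, Matrix.cons_val_one,
      Matrix.empty_val', Matrix.cons_val_fin_one]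
    linarith

/-- **Lemma 8 (automorphs of an indefinite form).** Let `Q = [a,b,c]` be a primitive
indefinite integral binary quadratic form whose discriminant `d = b² - 4ac > 0` is not a
perfect square, and let `(t, s)` be the minimal positive solution of `t² - d s² = 4`.
Then the matrix `T₀ = ((t-bs)/2, -cs; as, (t+bs)/2)` lies in `SL₂(ℤ)`, has infinite
order, and the stabilizer of `Q` in `SL₂(ℤ)` is exactly `{± T₀^m : m ∈ ℤ}` (so it is
isomorphic to `ℤ/2ℤ × ℤ`, generated by `-I` and `T₀`). -/
theorem stabilizer_indefinite (a b c : ℤ) (hprim : Int.gcd a (Int.gcd b c) = 1)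
    (hd : 0 < b ^ 2 - 4 * a * c) (hns : ¬∃ r : ℤ, r ^ 2 = b ^ 2 - 4 * a * c)
    (t s : ℤ) (ht : 0 < t) (hs : 0 < s)
    (hpell : t ^ 2 - (b ^ 2 - 4 * a * c) * s ^ 2 = 4)
    (hmin : ∀ t' s' : ℤ, 0 < t' → 0 < s' →
      t' ^ 2 - (b ^ 2 - 4 * a * c) * s' ^ 2 = 4 → t ≤ t') :
    ∃ T₀ : Matrix.SpecialLinearGroup (Fin 2) ℤ,
      (T₀ : Matrix (Fin 2) (Fin 2) ℤ) = !![(t - b * s) / 2, -c * s; a * s, (t + b * s) / 2] ∧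
      (∀ m : ℤ, m ≠ 0 → T₀ ^ m ≠ 1) ∧
      {g : Matrix.SpecialLinearGroup (Fin 2) ℤ | actForm g (a, b, c) = (a, b, c)} =
        {g : Matrix.SpecialLinearGroup (Fin 2) ℤ | ∃ m : ℤ,
          (g : Matrix (Fin 2) (Fin 2) ℤ) = ((T₀ ^ m : Matrix.SpecialLinearGroup (Fin 2) ℤ) : Matrix (Fin 2) (Fin 2) ℤ) ∨
          (g : Matrix (Fin 2) (Fin 2) ℤ) = -((T₀ ^ m : Matrix.SpecialLinearGroup (Fin 2) ℤ) : Matrix (Fin 2) (Fin 2) ℤ)} := by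
  have ha : a ≠ 0 := fun h ↦ hns ⟨b, by rw [h]; ring⟩
  obtain ⟨T₀, hT₀eq, hT₀, htrace⟩ := exists_automorph_of_pell hpell
  obtain ⟨hinf, hmem⟩ :=
    zpow_ne_one_and_mem_automorphGroup_iff ha hd hT₀ hs (htrace ▸ ht) (htrace ▸ hmin)
  refine ⟨T₀, hT₀eq, hinf, ?_⟩
  rw [setOf_actForm_eq_eq_automorphGroup hprim]
  ext g
  simp only [SetLike.mem_coe, hmem, Set.mem_ofPred_eq, ← Matrix.SpecialLinearGroup.coe_neg]
  exact exists_congr fun _ ↦ or_congr Subtype.ext_iff Subtype.ext_iff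
end

section
/- Let k be a positive integer. Every integral binary quadratic form of discriminant 4k² is properly equivalent to exactly one of the forms [0, 2k, c] with c ∈ {0, 1, …, 2k−1}. In particular, there are exactly 2k proper SL₂(ℤ)-equivalence classes of integral binary quadratic forms of discriminant 4k². -/
/-!
If `b² - 4ac = m²`, the integer matrix `[[2a, b + m], [b - m, 2c]]` has determinant
`m² - (b² - 4ac) = 0`, so it has a primitive kernel vector `(p, r)`. Completing `(p, r)` to the
first column of some `g ∈ SL₂(ℤ)` moves `[a, b, c]` to a form `[0, m, c']`, and the translations
`(1 t; 0 1)` change `c'` by arbitrary multiples of `m`. Conversely, an element of `SL₂(ℤ)` carrying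
`[0, m, c]` to `[0, m, c']` with `m ≠ 0` is upper triangular with diagonal `±1`, so `c' ≡ c mod m`.
-/

open Filter Real Asymptotics

open Matrix ModularGroup

lemma actForm_mul (g h : SpecialLinearGroup (Fin 2) ℤ) (Q : ℤ × ℤ × ℤ) :
    actForm (g * h) Q = actForm h (actForm g Q) := by
  simp only [actForm, Matrix.SpecialLinearGroup.coe_mul, mul_apply, Fin.sum_univ_two,
    Prod.mk.injEq]
  refine ⟨by ring, by ring, by ring⟩

lemma actForm_one (Q : ℤ × ℤ × ℤ) : actForm 1 Q = Q := by
  simp [actForm]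

namespace ProperEquiv

lemma symm {Q Q' : ℤ × ℤ × ℤ} (h : ProperEquiv Q Q') : ProperEquiv Q' Q := by
  obtain ⟨g, rfl⟩ := h
  exact ⟨g⁻¹, by rw [← actForm_mul, mul_inv_cancel, actForm_one]⟩

lemma trans {Q Q' Q'' : ℤ × ℤ × ℤ} (h : ProperEquiv Q Q') (h' : ProperEquiv Q' Q'') :
    ProperEquiv Q Q'' := by
  obtain ⟨g, rfl⟩ := h
  obtain ⟨g', rfl⟩ := h'
  exact ⟨g * g', actForm_mul g g' Q⟩

end ProperEquiv

lemma exists_isCoprime_mulVec_eq_zero {M : Matrix (Fin 2) (Fin 2) ℤ} (hM : M.det = 0) :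
    ∃ v : Fin 2 → ℤ, IsCoprime (v 0) (v 1) ∧ M *ᵥ v = 0 := by
  obtain ⟨w, hw0, hw⟩ := exists_mulVec_eq_zero_iff.mpr hM
  have hgcd : 0 < Int.gcd (w 0) (w 1) := by
    refine Int.gcd_pos_iff.mpr ?_
    contrapose! hw0
    ext i; fin_cases i <;> simp [hw0]
  obtain ⟨d, p, r, hd, hpr, hp, hr⟩ := Int.exists_gcd_one' hgcd
  have hw_eq : w = (d : ℤ) • ![p, r] := by
    ext i; fin_cases i <;> simp [hp, hr, mul_comm]
  refine ⟨![p, r], Int.isCoprime_iff_gcd_eq_one.mpr hpr, ?_⟩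
  rw [hw_eq, mulVec_smul, smul_eq_zero] at hw
  exact hw.resolve_left (by exact_mod_cast hd.ne')

lemma SpecialLinearGroup.exists_transpose_eq {R : Type*} [CommRing R] {v : Fin 2 → R}
    (hv : IsCoprime (v 0) (v 1)) :
    ∃ g : SpecialLinearGroup (Fin 2) R, (g : Matrix (Fin 2) (Fin 2) R)ᵀ 0 = v := by
  obtain ⟨u, t, hut⟩ := hv
  refine ⟨⟨!![v 0, -t; v 1, u], by rw [det_fin_two_of]; linear_combination hut⟩, ?_⟩
  ext i; fin_cases i <;> rfl

def rootMatrix (Q : ℤ × ℤ × ℤ) (m : ℤ) : Matrix (Fin 2) (Fin 2) ℤ :=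
  !![2 * Q.1, Q.2.1 + m; Q.2.1 - m, 2 * Q.2.2]

lemma det_rootMatrix (Q : ℤ × ℤ × ℤ) (m : ℤ) :
    (rootMatrix Q m).det = m ^ 2 - discrim Q.1 Q.2.1 Q.2.2 := by
  rw [rootMatrix, det_fin_two_of, discrim]; ring

lemma actForm_eq_of_rootMatrix_mulVec (g : SpecialLinearGroup (Fin 2) ℤ) (Q : ℤ × ℤ × ℤ)
    (m : ℤ) (h : rootMatrix Q m *ᵥ (g : Matrix (Fin 2) (Fin 2) ℤ)ᵀ 0 = 0) :
    actForm g Q = (0, m, (actForm g Q).2.2) := by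
  obtain ⟨a, b, c⟩ := Q
  have hdet := g.2
  rw [det_fin_two] at hdet
  set p := (g : Matrix (Fin 2) (Fin 2) ℤ) 0 0
  set q := (g : Matrix (Fin 2) (Fin 2) ℤ) 0 1
  set r := (g : Matrix (Fin 2) (Fin 2) ℤ) 1 0
  set s := (g : Matrix (Fin 2) (Fin 2) ℤ) 1 1
  have h0 : 2 * a * p + (b + m) * r = 0 := by
    simpa [rootMatrix, vecHead, vecTail] using congrFun h 0
  have h1 : (b - m) * p + 2 * c * r = 0 := by
    simpa [rootMatrix, vecHead, vecTail] using congrFun h 1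
  simp only [actForm, Prod.mk.injEq, and_true]
  constructor
  · have : 2 * (a * p ^ 2 + b * p * r + c * r ^ 2) = 0 := by linear_combination p * h0 + r * h1
    linarith
  · linear_combination q * h0 + s * h1 + m * hdet

lemma exists_properEquiv_of_discrim_eq_sq (Q : ℤ × ℤ × ℤ) (m : ℤ)
    (h : discrim Q.1 Q.2.1 Q.2.2 = m ^ 2) : ∃ c, ProperEquiv Q (0, m, c) := by
  have hdet : (rootMatrix Q m).det = 0 := by rw [det_rootMatrix, h, sub_self]
  obtain ⟨v, hv, hker⟩ := exists_isCoprime_mulVec_eq_zero hdet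
  obtain ⟨g, rfl⟩ := SpecialLinearGroup.exists_transpose_eq hv
  exact ⟨_, g, actForm_eq_of_rootMatrix_mulVec g Q m hker⟩

lemma properEquiv_add_mul (m c t : ℤ) : ProperEquiv (0, m, c) (0, m, c + m * t) :=
  ⟨T ^ t, by simp [actForm, coe_T_zpow, add_comm]⟩

lemma ProperEquiv.modEq {m c c' : ℤ} (h : ProperEquiv (0, m, c) (0, m, c')) (hm : m ≠ 0) :
    c ≡ c' [ZMOD m] := by
  obtain ⟨g, hg⟩ := h
  have hdet := g.2
  rw [det_fin_two] at hdet
  simp only [actForm, Prod.mk.injEq] at hg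
  set p := (g : Matrix (Fin 2) (Fin 2) ℤ) 0 0
  set q := (g : Matrix (Fin 2) (Fin 2) ℤ) 0 1
  set r := (g : Matrix (Fin 2) (Fin 2) ℤ) 1 0
  set s := (g : Matrix (Fin 2) (Fin 2) ℤ) 1 1
  obtain ⟨ha, hb, hc⟩ := hg
  have hr : r = 0 := by
    by_contra hr
    have h1 : m * p + c * r = 0 :=
      (mul_eq_zero.mp (by linear_combination ha : r * (m * p + c * r) = 0)).resolve_left hr
    have h2 : m * q + c * s = 0 :=
      (mul_eq_zero.mp (by linear_combination hb - m * hdet : (2 * r) * (m * q + c * s) = 0)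
        ).resolve_left (by omega)
    exact hm (by linear_combination s * h1 - r * h2 - m * hdet)
  rw [hr] at hdet
  have hs : s ^ 2 = 1 := Int.isUnit_sq (.of_mul_eq_one_right p (by linarith))
  exact Int.modEq_iff_dvd.mpr ⟨q * s, by linear_combination -hc + c * hs⟩

/-- **Classes of square discriminant.** For a positive integer `k`, every integral binary
quadratic form of discriminant `4k²` is properly equivalent to exactly one of the forms
`[0, 2k, c]` with `c ∈ {0, 1, …, 2k-1}`; in particular there are exactly `2k` proper
`SL₂(ℤ)`-equivalence classes of forms of discriminant `4k²`. -/
theorem classes_square_discriminant (k : ℕ) (hk : 0 < k) :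
    ∀ Q : ℤ × ℤ × ℤ, Q.2.1 ^ 2 - 4 * Q.1 * Q.2.2 = 4 * (k : ℤ) ^ 2 →
      ∃! c : ℤ, 0 ≤ c ∧ c < 2 * (k : ℤ) ∧ ProperEquiv Q (0, 2 * (k : ℤ), c) := by
  intro Q hQ
  have hm : (0 : ℤ) < 2 * k := by positivity
  obtain ⟨c, hc⟩ := exists_properEquiv_of_discrim_eq_sq Q (2 * k) (by rw [discrim, hQ]; ring)
  refine ⟨c % (2 * k), ⟨Int.emod_nonneg c hm.ne', Int.emod_lt_of_pos c hm, ?_⟩, ?_⟩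
  · simpa [← sub_eq_add_neg, ← Int.emod_def] using
      hc.trans (properEquiv_add_mul (2 * k) c (-(c / (2 * k))))
  · rintro c' ⟨hc'0, hc'lt, hc'⟩
    exact (Int.emod_eq_of_lt hc'0 hc'lt).symm.trans ((hc'.symm.trans hc).modEq hm.ne')
end
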